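/- Let X be an n×n real Gaussian matrix. Then E[ perm(X)⁴ ] = ((n+1)(n+2)/2)·(n!)², i.e. E[perm(X)⁴] equals the binomial coefficient C(n+2, 2) times (n!)². -/

import Mathlib

open MeasureTheory ProbabilityTheory Filter

/-- The distribution of an n×n real Gaussian matrix: i.i.d. standard real Gaussian
entries (mean 0, variance 1). -/
noncomputable def gMatR (n : ℕ) : Measure (Fin n → Fin n → ℝ) :=
  Measure.pi fun _ => Measure.pi fun _ => gaussianReal 0 1

/-- The permanent of an n×n real matrix. -/
noncomputable def rperm {n : ℕ} (A : Fin n → Fin n → ℝ) : ℝ :=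
  ∑ σ : Equiv.Perm (Fin n), ∏ i, A i (σ i)

/-- The ε-noise of a matrix X with noise matrix U: √(1-ε)·X + √ε·U. -/
noncomputable def noisyR {n : ℕ} (ε : ℝ) (X U : Fin n → Fin n → ℝ) : Fin n → Fin n → ℝ :=
  fun i j => Real.sqrt (1 - ε) * X i j + Real.sqrt ε * U i j

/-- g(X) = E[perm(Y)² | X], where Y is an ε-noise of X: since the noise matrix U is
independent of X, this conditional expectation is the integral over U. -/
noncomputable def gFunR (n : ℕ) (ε : ℝ) (X : Fin n → Fin n → ℝ) : ℝ :=
  ∫ U, (rperm (noisyR ε X U)) ^ 2 ∂(gMatR n)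

/-- Covariance of two real random variables: Cov(f,g) = E[(f - E f)(g - E g)]. -/
noncomputable def cov {α : Type*} [MeasurableSpace α] (μ : Measure α) (f g : α → ℝ) : ℝ :=
  ∫ x, (f x - ∫ y, f y ∂μ) * (g x - ∫ y, g y ∂μ) ∂μ

/-- Correlation: corr(f,g) = Cov(f,g)/(√Var(f)·√Var(g)). -/
noncomputable def corr {α : Type*} [MeasurableSpace α] (μ : Measure α) (f g : α → ℝ) : ℝ :=
  cov μ f g / (Real.sqrt (cov μ f f) * Real.sqrt (cov μ g g))
/-!
Expanding `perm(X)⁴` gives a sum over quadruples `(σ, τ, ρ, π)` of permutations of terms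
`∏ᵢ X i (σ i) X i (τ i) X i (ρ i) X i (π i)`. The rows of `X` are independent, and by Wick's
formula the moment `E[x_a x_b x_c x_d]` of a standard Gaussian vector counts those of the three
pairings `{ab|cd}`, `{ac|bd}`, `{ad|bc}` on whose blocks `(a, b, c, d)` is constant. Expanding the
product over rows turns the expectation into `∑_c N(c)` over colourings `c` of the rows by the
three pairings, where `N(c)` counts the quadruples constant on the blocks of `c i` in every row
`i`. Such a quadruple is determined by `σ` and a permutation preserving the fibres of `c`, so
`N(c) = n! ∏ₖ |c⁻¹ k|!`; and `∑_c ∏ₖ |c⁻¹ k|! = 3 · 4 ⋯ (n + 2)` because colouring one more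
point `k₀` multiplies the `k₀`-th factorial by `|c⁻¹ k₀| + 1`, which sums to `n + 3` over `k₀`.
-/

open MeasureTheory ProbabilityTheory Finset Equiv Nat

section GaussianMoments

lemma hasDerivAt_gaussianPDFReal_zero_one (x : ℝ) :
    HasDerivAt (gaussianPDFReal 0 1) (-x * gaussianPDFReal 0 1 x) x := by
  have hφ : gaussianPDFReal 0 1 = fun y => (√(2 * Real.pi))⁻¹ * Real.exp (y ^ 2 / -2) := by
    ext y; simp [gaussianPDFReal_def, neg_div, div_neg]
  rw [hφ]
  refine ((((hasDerivAt_pow 2 x).div_const (-2)).exp).const_mul _).congr_deriv ?_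
  simp; ring

lemma integrable_pow_gaussianReal (k : ℕ) : Integrable (fun x => x ^ k) (gaussianReal 0 1) :=
  integrable_pow_of_mem_interior_integrableExpSet (X := fun x => x) (by simp) k

lemma integrable_gaussianPDFReal_mul_pow (k : ℕ) :
    Integrable fun x => gaussianPDFReal 0 1 x * x ^ k := by
  have h := integrable_pow_gaussianReal k
  rw [gaussianReal_of_var_ne_zero _ one_ne_zero, integrable_withDensity_iff_integrable_smul'
    (measurable_gaussianPDF 0 1) (ae_of_all _ fun _ => gaussianPDF_lt_top)] at h
  simpa [toReal_gaussianPDF] using h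

/-- Gaussian integration by parts, `x φ(x) = -φ'(x)`, applied to `x ↦ x ^ (k + 1)`. -/
lemma integral_pow_add_two_gaussianReal (k : ℕ) :
    ∫ x, x ^ (k + 2) ∂gaussianReal 0 1 = (k + 1) * ∫ x, x ^ k ∂gaussianReal 0 1 := by
  have hderiv (x : ℝ) : HasDerivAt (fun x => gaussianPDFReal 0 1 x * x ^ (k + 1))
      ((k + 1) * (gaussianPDFReal 0 1 x * x ^ k) - gaussianPDFReal 0 1 x * x ^ (k + 2)) x := by
    refine ((hasDerivAt_gaussianPDFReal_zero_one x).mul (hasDerivAt_pow _ x)).congr_deriv ?_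
    push_cast; ring
  have hint_k := (integrable_gaussianPDFReal_mul_pow k).const_mul (k + 1)
  have h0 := integral_eq_zero_of_hasDerivAt_of_integrable hderiv
    (hint_k.sub (integrable_gaussianPDFReal_mul_pow _)) (integrable_gaussianPDFReal_mul_pow _)
  rw [integral_sub hint_k (integrable_gaussianPDFReal_mul_pow _), integral_const_mul,
    sub_eq_zero] at h0
  simp only [integral_gaussianReal_eq_integral_smul one_ne_zero, smul_eq_mul, h0]

lemma integral_pow_two_gaussianReal : ∫ x, x ^ 2 ∂gaussianReal 0 1 = 1 := by
  simpa using integral_pow_add_two_gaussianReal 0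

lemma integral_pow_three_gaussianReal : ∫ x, x ^ 3 ∂gaussianReal 0 1 = 0 := by
  simpa using integral_pow_add_two_gaussianReal 1

lemma integral_pow_four_gaussianReal : ∫ x, x ^ 4 ∂gaussianReal 0 1 = 3 := by
  rw [integral_pow_add_two_gaussianReal 2, integral_pow_two_gaussianReal]
  norm_num

end GaussianMoments

section Wick

variable {ι : Type*} [Fintype ι]

lemma integral_prod_pow_pi_gaussianReal (e : ι → ℕ) :
    ∫ x, ∏ j, x j ^ e j ∂(Measure.pi fun _ : ι => gaussianReal 0 1) =
      ∏ j, ∫ t, t ^ e j ∂gaussianReal 0 1 :=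
  integral_fintype_prod_eq_prod fun j t => t ^ e j

lemma integrable_prod_pow_pi_gaussianReal (e : ι → ℕ) :
    Integrable (fun x => ∏ j, x j ^ e j) (Measure.pi fun _ : ι => gaussianReal 0 1) :=
  Integrable.fintype_prod fun j => integrable_pow_gaussianReal (e j)

variable [DecidableEq ι]

lemma mul_mul_mul_eq_prod_pow (a b c d : ι) (x : ι → ℝ) :
    x a * x b * x c * x d = ∏ j, x j ^ ((if a = j then 1 else 0) + (if b = j then 1 else 0) +
      (if c = j then 1 else 0) + (if d = j then 1 else 0)) := by
  simp only [pow_add, prod_mul_distrib, pow_ite, pow_one, pow_zero, prod_ite_eq, mem_univ,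
    if_true]

lemma integrable_mul_mul_mul_pi_gaussianReal (a b c d : ι) :
    Integrable (fun x => x a * x b * x c * x d) (Measure.pi fun _ : ι => gaussianReal 0 1) := by
  simp_rw [mul_mul_mul_eq_prod_pow a b c d]
  exact integrable_prod_pow_pi_gaussianReal _

theorem integral_mul_mul_mul_pi_gaussianReal (a b c d : ι) :
    ∫ x, x a * x b * x c * x d ∂(Measure.pi fun _ : ι => gaussianReal 0 1) =
      (if a = b ∧ c = d then 1 else 0) + (if a = c ∧ b = d then 1 else 0) +
        (if a = d ∧ b = c then 1 else 0) := by
  simp_rw [mul_mul_mul_eq_prod_pow a b c d, integral_prod_pow_pi_gaussianReal]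
  rw [← prod_subset (subset_univ {a, b, c, d}) fun j _ hj => by
    simp only [mem_insert, mem_singleton, not_or] at hj
    simp [Ne.symm hj.1, Ne.symm hj.2.1, Ne.symm hj.2.2.1, Ne.symm hj.2.2.2]]
  by_cases hab : a = b <;> by_cases hac : a = c <;> by_cases had : a = d <;>
    by_cases hbc : b = c <;> by_cases hbd : b = d <;> by_cases hcd : c = d <;>
    simp_all [integral_pow_two_gaussianReal, integral_pow_three_gaussianReal,
      integral_pow_four_gaussianReal, prod_insert, Ne.symm, one_add_one_eq_two,
      two_add_one_eq_three]

end Wick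

section Pairings

/-- `Fin 3` indexes the perfect matchings `{01|23}`, `{02|13}`, `{03|12}` of four positions. -/
def PairedBy {α : Type*} : Fin 3 → α → α → α → α → Prop
  | 0, a, b, c, d => a = b ∧ c = d
  | 1, a, b, c, d => a = c ∧ b = d
  | 2, a, b, c, d => a = d ∧ b = c

instance {α : Type*} [DecidableEq α] :
    ∀ (k : Fin 3) (a b c d : α), Decidable (PairedBy k a b c d)
  | 0, _, _, _, _ => instDecidableAnd
  | 1, _, _, _, _ => instDecidableAnd
  | 2, _, _, _, _ => instDecidableAnd

@[simp] lemma pairedBy_zero {α : Type*} (a b c d : α) :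
    PairedBy 0 a b c d ↔ a = b ∧ c = d := Iff.rfl

@[simp] lemma pairedBy_one {α : Type*} (a b c d : α) :
    PairedBy 1 a b c d ↔ a = c ∧ b = d := Iff.rfl

@[simp] lemma pairedBy_two {α : Type*} (a b c d : α) :
    PairedBy 2 a b c d ↔ a = d ∧ b = c := Iff.rfl

lemma sum_pairedBy {α : Type*} [DecidableEq α] (a b c d : α) :
    ∑ k : Fin 3, (if PairedBy k a b c d then (1 : ℝ) else 0) =
      (if a = b ∧ c = d then 1 else 0) + (if a = c ∧ b = d then 1 else 0) +
        (if a = d ∧ b = c then 1 else 0) := by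
  rw [Fin.sum_univ_three]
  rfl

lemma pairedBy_apply_iff {α β : Type*} {f : α → β} (hf : Function.Injective f) (k : Fin 3)
    (a b c d : α) : PairedBy k (f a) (f b) (f c) (f d) ↔ PairedBy k a b c d := by
  fin_cases k <;> simp [PairedBy, hf.eq_iff]

lemma fin_three_cases (k : Fin 3) : k = 0 ∨ k = 1 ∨ k = 2 := by omega

end Pairings

section FiberwisePerm

variable {ι κ : Type*}

def Equiv.Perm.fiberwise (c : ι → κ) (p : κ → Perm ι) (hp : ∀ k, c ∘ p k = c) : Perm ι where
  toFun i := p (c i) i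
  invFun i := (p (c i)).symm i
  left_inv i := by
    simp only [show c (p (c i) i) = c i from congrFun (hp _) i, symm_apply_apply]
  right_inv i := by
    have : c ((p (c i)).symm i) = c i := by
      simpa using (congrFun (hp (c i)) ((p (c i)).symm i)).symm
    simp only [this, apply_symm_apply]

lemma Equiv.Perm.fiberwise_apply (c : ι → κ) (p : κ → Perm ι) (hp : ∀ k, c ∘ p k = c)
    (i : ι) : Perm.fiberwise c p hp i = p (c i) i := rfl

lemma Equiv.Perm.comp_fiberwise (c : ι → κ) (p : κ → Perm ι) (hp : ∀ k, c ∘ p k = c) :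
    c ∘ Perm.fiberwise c p hp = c :=
  funext fun i => congrFun (hp (c i)) i

lemma Equiv.Perm.apply_mem_fiber_iff_of_fixes {c : ι → κ} {p : Perm ι} {k : κ}
    (hp : ∀ i, c i = k → p i = i) (i : ι) : c (p i) = k ↔ c i = k :=
  ⟨fun h => by rwa [p.injective (hp _ h)] at h, fun h => by rwa [hp i h]⟩

end FiberwisePerm

section Counting

variable {ι : Type*} (c : ι → Fin 3)

def offFiber (g : {g : Perm ι // c ∘ g = c}) (k : Fin 3) : Perm ι :=
  Perm.fiberwise c (fun l => if l = k then 1 else g) fun l => by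
    split_ifs
    · rfl
    · exact g.2

lemma offFiber_apply (g : {g : Perm ι // c ∘ g = c}) (k : Fin 3) (i : ι) :
    offFiber c g k i = if c i = k then i else g.1 i := by
  simp only [offFiber, Perm.fiberwise_apply]
  split_ifs <;> rfl

abbrev PairedTriples :=
  {t : Perm ι × Perm ι × Perm ι // ∀ i, PairedBy (c i) i (t.1 i) (t.2.1 i) (t.2.2 i)}

variable {c}

lemma apply_mem_fiber_of_pairedBy {τ ρ π : Perm ι}
    (h : ∀ i, PairedBy (c i) i (τ i) (ρ i) (π i)) (i : ι) :
    c (τ i) = c i ∧ c (ρ i) = c i ∧ c (π i) = c i := by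
  -- `τ`, `ρ`, `π` fix the fibres over `0`, `1`, `2` pointwise, so none of them moves another
  -- point into that fibre; on every other fibre each agrees with one of the other two, and the
  -- two colours excluded this way leave only the right one.
  have fixes (k : Fin 3) (p : Perm ι) (hk : ∀ i, c i = k → i = p i) :=
    Perm.apply_mem_fiber_iff_of_fixes (c := c) (p := p) fun i hi => (hk i hi).symm
  have hτ := fixes 0 τ fun i hi => by have := h i; rw [hi] at this; exact this.1
  have hρ := fixes 1 ρ fun i hi => by have := h i; rw [hi] at this; exact this.1
  have hπ := fixes 2 π fun i hi => by have := h i; rw [hi] at this; exact this.1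
  have hblocks : (c i = 0 → c (ρ i) = c (π i)) ∧ (c i = 1 → c (τ i) = c (π i)) ∧
      (c i = 2 → c (τ i) = c (ρ i)) := by
    refine ⟨fun hi => ?_, fun hi => ?_, fun hi => ?_⟩ <;>
      · have := h i; rw [hi] at this; rw [this.2]
  have := hτ i; have := hρ i; have := hπ i
  omega

variable (c)

def pairedTriplesEquivStabilizer : PairedTriples c ≃ {g : Perm ι // c ∘ g = c} where
  toFun t := ⟨Perm.fiberwise c (fun k => if k = 0 then t.1.2.1 else t.1.1) fun k =>
      funext fun i => by
        split_ifs
        exacts [(apply_mem_fiber_of_pairedBy t.2 i).2.1,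
          (apply_mem_fiber_of_pairedBy t.2 i).1],
    Perm.comp_fiberwise _ _ _⟩
  invFun g := ⟨(offFiber c g 0, offFiber c g 1, offFiber c g 2), fun i => by
    simp only [offFiber_apply]
    rcases fin_three_cases (c i) with h | h | h <;> simp [h, PairedBy]⟩
  left_inv t := by
    obtain ⟨⟨τ, ρ, π⟩, h⟩ := t
    refine Subtype.ext (Prod.ext (Perm.ext fun i => ?_)
      (Prod.ext (Perm.ext fun i => ?_) (Perm.ext fun i => ?_))) <;>
    · simp only [offFiber_apply, Perm.fiberwise_apply]
      have := h i
      rcases fin_three_cases (c i) with hi | hi | hi <;> rw [hi] at this <;>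
        simp only [pairedBy_zero, pairedBy_one, pairedBy_two] at this <;> simp [hi] <;> tauto
  right_inv g := by
    ext i
    simp only [Perm.fiberwise_apply]
    rcases fin_three_cases (c i) with h | h | h <;> simp [h, offFiber_apply]

abbrev PairedQuadruples :=
  {q : Perm ι × Perm ι × Perm ι × Perm ι //
    ∀ i, PairedBy (c i) (q.1 i) (q.2.1 i) (q.2.2.1 i) (q.2.2.2 i)}

def pairedQuadruplesEquiv : PairedQuadruples c ≃ Perm ι × PairedTriples c where
  toFun q := (q.1.1, ⟨(q.1.1⁻¹ * q.1.2.1, q.1.1⁻¹ * q.1.2.2.1, q.1.1⁻¹ * q.1.2.2.2), fun i => by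
    rw [← pairedBy_apply_iff q.1.1.injective]
    simpa using q.2 i⟩)
  invFun p := ⟨(p.1, p.1 * p.2.1.1, p.1 * p.2.1.2.1, p.1 * p.2.1.2.2), fun i =>
    (pairedBy_apply_iff p.1.injective _ _ _ _ _).2 (p.2.2 i)⟩
  left_inv q := by simp
  right_inv p := by simp

variable [Fintype ι] [DecidableEq ι]

theorem card_pairedQuadruples :
    Fintype.card (PairedQuadruples c) =
      (Fintype.card ι)! * ∏ k, (Fintype.card {i // c i = k})! := by
  rw [Fintype.card_congr (pairedQuadruplesEquiv c), Fintype.card_prod, Fintype.card_perm,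
    Fintype.card_congr (pairedTriplesEquivStabilizer c), DomMulAct.stabilizer_card]

variable (ι) in
theorem sum_prod_sum_pairedBy :
    ∑ q : Perm ι × Perm ι × Perm ι × Perm ι, ∏ i, ∑ k : Fin 3,
        (if PairedBy k (q.1 i) (q.2.1 i) (q.2.2.1 i) (q.2.2.2 i) then 1 else 0) =
      (Fintype.card ι)! * ∑ c : ι → Fin 3, ∏ k, (Fintype.card {i // c i = k})! := by
  simp_rw [prod_univ_sum, Fintype.piFinset_univ, Fintype.prod_boole]
  rw [sum_comm, mul_sum]
  refine sum_congr rfl fun c _ => ?_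
  rw [sum_boole, ← card_pairedQuadruples, Fintype.card_subtype, Nat.cast_id]

end Counting

theorem sum_prod_factorial_card_fiber (κ : Type*) [Fintype κ] [DecidableEq κ] (n : ℕ) :
    ∑ c : Fin n → κ, ∏ k, (Fintype.card {i // c i = k})! = (Fintype.card κ).ascFactorial n := by
  induction n with
  | zero => simp
  | succ n ih =>
    have hcons (k₀ : κ) (c : Fin n → κ) (k : κ) :
        Fintype.card {i // (Fin.cons k₀ c : Fin (n + 1) → κ) i = k} =
          Fintype.card {i // c i = k} + if k₀ = k then 1 else 0 := by
      simp only [Fintype.card_subtype, card_filter, Fin.sum_univ_succ, Fin.cons_zero,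
        Fin.cons_succ]
      exact add_comm _ _
    have hfactorial (m : ℕ) (b : Prop) [Decidable b] :
        (m + if b then 1 else 0)! = m ! * if b then m + 1 else 1 := by
      split_ifs <;> simp [factorial_succ, mul_comm]
    have hfibers (c : Fin n → κ) : ∑ k, Fintype.card {i // c i = k} = n := by
      simpa using Fintype.card_congr (Equiv.sigmaFiberEquiv c)
    calc ∑ c : Fin (n + 1) → κ, ∏ k, (Fintype.card {i // c i = k})!
        = ∑ k₀, ∑ c : Fin n → κ,
            ∏ k, (Fintype.card {i // (Fin.cons k₀ c : Fin (n + 1) → κ) i = k})! := by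
          rw [← (Fin.consEquiv fun _ => κ).sum_comp, Fintype.sum_prod_type]
          rfl
      _ = ∑ c : Fin n → κ, (n + Fintype.card κ) * ∏ k, (Fintype.card {i // c i = k})! := by
          rw [sum_comm]
          refine sum_congr rfl fun c _ => ?_
          simp only [hcons, hfactorial, prod_mul_distrib, prod_ite_eq, mem_univ, if_true]
          rw [← mul_sum, mul_comm, sum_add_distrib, hfibers]
          simp
      _ = (Fintype.card κ).ascFactorial (n + 1) := by
          rw [← mul_sum, ih, ascFactorial_succ, add_comm]

lemma rperm_pow_four {n : ℕ} (X : Fin n → Fin n → ℝ) :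
    rperm X ^ 4 = ∑ q : Perm (Fin n) × Perm (Fin n) × Perm (Fin n) × Perm (Fin n),
      ∏ i, X i (q.1 i) * X i (q.2.1 i) * X i (q.2.2.1 i) * X i (q.2.2.2 i) := by
  simp only [Fintype.sum_prod_type, prod_mul_distrib, ← sum_mul, ← mul_sum]
  rw [rperm]
  ring

theorem integral_rperm_pow_four (n : ℕ) :
    ∫ X, rperm X ^ 4 ∂gMatR n = n ! * (3).ascFactorial n := by
  let μ : Fin n → Measure (Fin n → ℝ) := fun _ => Measure.pi fun _ => gaussianReal 0 1
  have hint (q : Perm (Fin n) × Perm (Fin n) × Perm (Fin n) × Perm (Fin n)) :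
      Integrable (fun X : Fin n → Fin n → ℝ =>
        ∏ i, X i (q.1 i) * X i (q.2.1 i) * X i (q.2.2.1 i) * X i (q.2.2.2 i)) (gMatR n) :=
    Integrable.fintype_prod (μ := μ) fun i => integrable_mul_mul_mul_pi_gaussianReal _ _ _ _
  have hwick (q : Perm (Fin n) × Perm (Fin n) × Perm (Fin n) × Perm (Fin n)) :
      ∫ X, ∏ i, X i (q.1 i) * X i (q.2.1 i) * X i (q.2.2.1 i) * X i (q.2.2.2 i) ∂gMatR n =
        ∏ i, ∑ k : Fin 3,
          if PairedBy k (q.1 i) (q.2.1 i) (q.2.2.1 i) (q.2.2.2 i) then 1 else 0 := by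
    simp_rw [sum_pairedBy]
    exact (integral_fintype_prod_eq_prod (μ := μ) _).trans
      (prod_congr rfl fun i _ => integral_mul_mul_mul_pi_gaussianReal _ _ _ _)
  simp_rw [rperm_pow_four]
  rw [integral_finsetSum _ fun q _ => hint q]
  simp_rw [hwick]
  have hcount := sum_prod_sum_pairedBy (Fin n)
  rw [sum_prod_factorial_card_fiber, Fintype.card_fin, Fintype.card_fin] at hcount
  exact_mod_cast hcount

/-- E[perm(X)⁴] = ((n+1)(n+2)/2)·(n!)² = C(n+2,2)·(n!)² for an n×n real
Gaussian matrix X. -/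
theorem fourth_moment_perm_real_gaussian (n : ℕ) :
    (∫ X, (rperm X) ^ 4 ∂(gMatR n)) =
      ((n : ℝ) + 1) * ((n : ℝ) + 2) / 2 * (Nat.factorial n : ℝ) ^ 2 ∧
    (∫ X, (rperm X) ^ 4 ∂(gMatR n)) =
      (Nat.choose (n + 2) 2 : ℝ) * (Nat.factorial n : ℝ) ^ 2 := by
  have h : (2 : ℝ) * (3).ascFactorial n = (n + 2) * (n + 1) * n ! := by
    have := factorial_mul_ascFactorial 2 n
    rw [factorial_two, show 2 + n = n + 1 + 1 by ring, factorial_succ, factorial_succ] at this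
    rw [← Nat.cast_ofNat, ← Nat.cast_mul, show 3 = 2 + 1 from rfl, this]
    push_cast
    ring
  rw [integral_rperm_pow_four, Nat.cast_choose_two]
  push_cast
  constructor <;> linear_combination (n ! / 2 : ℝ) * h
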